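/- arXiv:1307.6348 — 5 statements merged into one kernel-verified Lean document; each statement's English description precedes it below -/
import Mathlib

section
/- There exists a polynomial p : ℕ → ℕ such that for every finite alphabet Σ there is a function learner mapping each finite nonempty set of unordered words over Σ to a DME over Σ with: (soundness) for every finite nonempty set D of unordered words over Σ, D ⊆ L(learner(D)); and (completeness) for every DME E over Σ there exists a finite set CS_E ⊆ L(E) with |CS_E| ≤ p(|Σ|) such that for every finite set D with CS_E ⊆ D ⊆ L(E), L(learner(D)) = L(E). -/
namespace LSXML

/-- A multiplicity: one of `*`, `+`, `?`, `1`, `0`. -/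
inductive Mult : Type
  | star | plus | opt | one | zero
  deriving DecidableEq

/-- The set of natural numbers `⟦M⟧` denoted by a multiplicity `M`. -/
def Mult.sem : Mult → Set ℕ
  | .star => Set.univ
  | .plus => {n | 1 ≤ n}
  | .opt  => {0, 1}
  | .one  => {1}
  | .zero => {0}

/-- A disjunctive multiplicity expression (DME) `D₁^{M₁} ∥ ⋯ ∥ D_n^{M_n}` where each
`D_i` is a nonempty disjunction `a₁^{M'₁} | ⋯ | a_k^{M'_k}` of symbols with
multiplicities, and every symbol of the alphabet occurs at most once in the
whole expression. -/
structure DME (α : Type) : Type where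
  factors : List (List (α × Mult) × Mult)
  nonemptyDisj : ∀ d ∈ factors, d.1 ≠ []
  distinct : (factors.flatMap fun d => d.1.map Prod.fst).Nodup

/-- `L(a^M) = {a^i : i ∈ ⟦M⟧}`. -/
def atomLang {α : Type} (a : α) (M : Mult) : Set (Multiset α) :=
  {w | ∃ i ∈ Mult.sem M, w = Multiset.replicate i a}

/-- `L(a₁^{M₁} | ⋯ | a_k^{M_k}) = L(a₁^{M₁}) ∪ ⋯ ∪ L(a_k^{M_k})`. -/
def disjLang {α : Type} (d : List (α × Mult)) : Set (Multiset α) :=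
  {w | ∃ p ∈ d, w ∈ atomLang p.1 p.2}

/-- `L(D^M)`: multiset unions of `i` words of `L(D)`, for `i ∈ ⟦M⟧`. -/
def powLang {α : Type} (L : Set (Multiset α)) (M : Mult) : Set (Multiset α) :=
  {w | ∃ ws : List (Multiset α), ws.length ∈ Mult.sem M ∧ (∀ u ∈ ws, u ∈ L) ∧ w = ws.sum}

/-- Unordered concatenation (elementwise multiset union) of a list of languages. -/
def concatLang {α : Type} : List (Set (Multiset α)) → Set (Multiset α)
  | [] => {0}
  | L :: Ls => {w | ∃ u ∈ L, ∃ v ∈ concatLang Ls, w = u + v}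

/-- The language of unordered words of a DME. -/
def DME.lang {α : Type} (E : DME α) : Set (Multiset α) :=
  concatLang (E.factors.map fun d => powLang (disjLang d.1) d.2)

/-- A disjunction-free multiplicity expression `a₁^{M₁} ∥ ⋯ ∥ a_k^{M_k}` with
pairwise distinct symbols. -/
structure MExpr (α : Type) : Type where
  entries : List (α × Mult)
  distinct : (entries.map Prod.fst).Nodup

/-- The language of a disjunction-free multiplicity expression: multisets `w`
with `w(a_i) ∈ ⟦M_i⟧` for each entry `a_i^{M_i}` and `w(b) = 0` for every other
symbol `b`. -/
def MExpr.lang {α : Type} [DecidableEq α] (e : MExpr α) : Set (Multiset α) :=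
  {w | (∀ p ∈ e.entries, w.count p.1 ∈ Mult.sem p.2) ∧
       ∀ b : α, b ∉ e.entries.map Prod.fst → w.count b = 0}

/-- Finite rooted labeled trees. The list of children is to be understood as
unordered: its order is irrelevant for satisfaction of multiplicity schemas. -/
inductive UTree (α : Type) : Type
  | node : α → List (UTree α) → UTree α

/-- The label of the root of a tree. -/
def UTree.label {α : Type} : UTree α → α
  | .node a _ => a

/-- A tree satisfies a family of DME rules if for every node, the multiset of
labels of its children belongs to the language of the rule of its label. -/
inductive UTree.Sat {α : Type} (R : α → DME α) : UTree α → Prop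
  | node (a : α) (ts : List (UTree α)) :
      ((ts.map UTree.label : List α) : Multiset α) ∈ (R a).lang →
      (∀ t ∈ ts, UTree.Sat R t) →
      UTree.Sat R (UTree.node a ts)

/-- A disjunctive multiplicity schema (DMS): a root label together with a
DME rule for every symbol of the alphabet. -/
structure DMS (α : Type) : Type where
  root : α
  rules : α → DME α

/-- The set `L(S)` of trees satisfying a DMS `S`. -/
def DMS.lang {α : Type} (S : DMS α) : Set (UTree α) :=
  {t | t.label = S.root ∧ UTree.Sat S.rules t}

/-- Satisfaction of a family of disjunction-free rules. -/
inductive UTree.MSat {α : Type} [DecidableEq α] (R : α → MExpr α) : UTree α → Prop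
  | node (a : α) (ts : List (UTree α)) :
      ((ts.map UTree.label : List α) : Multiset α) ∈ (R a).lang →
      (∀ t ∈ ts, UTree.MSat R t) →
      UTree.MSat R (UTree.node a ts)

/-- A disjunction-free multiplicity schema (MS). -/
structure MS (α : Type) : Type where
  root : α
  rules : α → MExpr α

/-- The set `L(S)` of trees satisfying an MS `S`. -/
def MS.lang {α : Type} [DecidableEq α] (S : MS α) : Set (UTree α) :=
  {t | t.label = S.root ∧ UTree.MSat S.rules t}


/-!
A DME language is determined by "local" data together with its mandatory factors: a word `w`
belongs to `L(E)` iff every sub-multiset of `w` with at most two elements occurs inside some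
word of `L(E)`, and `w` meets every factor `D^M` whose language does not contain the empty
word. Inside a single factor `D^M` this holds because, when `M` allows repetition, `L(D^M)`
contains every word of admissible size over the letters `a` with `a ∈ L(D)`; otherwise its
nonempty words are powers `a^i` of a single letter, and for `i ≥ 1` whether `a^i` is
admissible depends only on `min i 2`.

The characteristic sample of `E` consists, for each realizable `v` with `|v| ≤ 2`, of `v`
completed by the first symbol of every mandatory factor that `v` misses; it has at most
`(|Σ| + 1)²` words. If the samples of `E` and `E'` lie in each other's languages, then the
local data agree, and a counting argument on mandatory factors (comparing first symbols,
in both directions) shows that every mandatory factor of `E'` contains the symbols of a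
mandatory factor of `E`. Hence `L(E) = L(E')`, and the learner returns any DME whose
sample is contained in the data and whose language contains the data.
-/

section Learnability

open scoped Classical

variable {α : Type}

/-- On positive integers, membership in `⟦m⟧` only depends on `min k 2`. -/
lemma Mult.mem_sem_of_le {m : Mult} {c k : ℕ} (hc : c ∈ m.sem) (hk : 1 ≤ k)
    (hkc : min k 2 ≤ c) : k ∈ m.sem := by
  cases m <;> simp [Mult.sem] at hc ⊢ <;> omega

lemma Mult.one_mem_sem_of_zero_notMem {m : Mult} (h : 0 ∉ m.sem) : 1 ∈ m.sem := by
  cases m <;> simp [Mult.sem] at h ⊢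

lemma exists_mem_of_mem_sum {l : List (Multiset α)} {a : α} (h : a ∈ l.sum) :
    ∃ u ∈ l, a ∈ u := by
  induction l with
  | nil => simp at h
  | cons u l ih =>
    rw [List.sum_cons, Multiset.mem_add] at h
    rcases h with h | h
    · exact ⟨u, List.mem_cons_self, h⟩
    · obtain ⟨u', hu', h⟩ := ih h
      exact ⟨u', List.mem_cons_of_mem u hu', h⟩

def LocallyIn (L : Set (Multiset α)) (w : Multiset α) : Prop :=
  ∀ v ≤ w, Multiset.card v ≤ 2 → ∃ u ∈ L, v ≤ u

lemma LocallyIn.of_le {L : Set (Multiset α)} {u w : Multiset α} (hu : u ∈ L) (hw : w ≤ u) :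
    LocallyIn L w :=
  fun _ hv _ => ⟨u, hu, hv.trans hw⟩

def symbols (f : List (α × Mult) × Mult) : List α := f.1.map Prod.fst

def factorLang (f : List (α × Mult) × Mult) : Set (Multiset α) := powLang (disjLang f.1) f.2

def Mandatory (f : List (α × Mult) × Mult) : Prop := (0 : Multiset α) ∉ factorLang f

lemma exists_mult_of_mem_factorLang {f : List (α × Mult) × Mult} {u : Multiset α}
    (hu : u ∈ factorLang f) {a : α} (ha : a ∈ u) : ∃ m, (a, m) ∈ f.1 ∧ 1 ∈ m.sem := by
  obtain ⟨ws, -, hws, rfl⟩ := hu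
  obtain ⟨u, hu, hau⟩ := exists_mem_of_mem_sum ha
  obtain ⟨⟨b, m⟩, hp, c, hc, rfl⟩ := hws u hu
  obtain ⟨hc0, rfl⟩ := Multiset.mem_replicate.mp hau
  exact ⟨m, hp, Mult.mem_sem_of_le hc le_rfl (by omega)⟩

lemma mem_symbols_of_mem_factorLang {f : List (α × Mult) × Mult} {u : Multiset α}
    (hu : u ∈ factorLang f) {a : α} (ha : a ∈ u) : a ∈ symbols f := by
  obtain ⟨m, hm, -⟩ := exists_mult_of_mem_factorLang hu ha
  exact List.mem_map.mpr ⟨(a, m), hm, rfl⟩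

lemma mem_factorLang_of_card_mem {f : List (α × Mult) × Mult} {u : Multiset α}
    (hM : Multiset.card u ∈ f.2.sem) (hu : ∀ a ∈ u, ∃ m, (a, m) ∈ f.1 ∧ 1 ∈ m.sem) :
    u ∈ factorLang f := by
  refine ⟨u.toList.map fun a => {a}, by simpa using hM, ?_, ?_⟩
  · simp only [List.mem_map, Multiset.mem_toList]
    rintro _ ⟨a, ha, rfl⟩
    obtain ⟨m, hm, h1⟩ := hu a ha
    exact ⟨(a, m), hm, 1, h1, rfl⟩
  · rw [← Multiset.sum_coe, ← Multiset.map_coe, Multiset.coe_toList, Multiset.sum_map_singleton]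

lemma mem_and_one_mem_of_two_notMem {L : Set (Multiset α)} {M : Mult} (h2 : 2 ∉ M.sem)
    {u : Multiset α} (hu : u ∈ powLang L M) (hu0 : u ≠ 0) : u ∈ L ∧ 1 ∈ M.sem := by
  obtain ⟨ws, hlen, hws, rfl⟩ := hu
  rcases ws with _ | ⟨v, _ | ⟨v', ws⟩⟩
  · exact (hu0 rfl).elim
  · exact ⟨by simpa using hws v (by simp), hlen⟩
  · exact absurd (Mult.mem_sem_of_le hlen (by norm_num) (by simp)) h2

lemma eq_replicate_of_locallyIn {f : List (α × Mult) × Mult} (h2 : 2 ∉ f.2.sem)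
    {u : Multiset α} (hu : LocallyIn (factorLang f) u) {a : α} (ha : a ∈ u) :
    u = Multiset.replicate (Multiset.card u) a := by
  refine Multiset.eq_replicate_card.mpr fun b hb => by_contra fun hba => ?_
  have hle : ({b, a} : Multiset α) ≤ u :=
    (Multiset.cons_le_of_notMem (by simpa using hba)).mpr ⟨hb, Multiset.singleton_le.mpr ha⟩
  obtain ⟨u', hu', hbau'⟩ := hu _ hle (by simp)
  have hbu' := Multiset.mem_of_le hbau' (by simp : b ∈ ({b, a} : Multiset α))
  obtain ⟨⟨p, -, c, -, rfl⟩, -⟩ :=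
    mem_and_one_mem_of_two_notMem h2 hu' (by rintro rfl; simp at hbu')
  exact hba ((Multiset.eq_of_mem_replicate hbu').trans (Multiset.eq_of_mem_replicate
    (Multiset.mem_of_le hbau' (by simp))).symm)

lemma mem_factorLang_of_locallyIn {f : List (α × Mult) × Mult} {u : Multiset α}
    (hu0 : u ≠ 0) (hu : LocallyIn (factorLang f) u) : u ∈ factorLang f := by
  by_cases h2 : 2 ∈ f.2.sem
  · refine mem_factorLang_of_card_mem
      (Mult.mem_sem_of_le h2 (Multiset.card_pos.mpr hu0) (min_le_right _ _)) fun b hb => ?_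
    obtain ⟨u', hu', hbu'⟩ := hu {b} (Multiset.singleton_le.mpr hb) (by simp)
    exact exists_mult_of_mem_factorLang hu' (Multiset.singleton_le.mp hbu')
  obtain ⟨a, ha⟩ := Multiset.exists_mem_of_ne_zero hu0
  have hrep := eq_replicate_of_locallyIn h2 hu ha
  set k := Multiset.card u
  have hk : 1 ≤ k := Multiset.card_pos.mpr hu0
  have hle : Multiset.replicate (min k 2) a ≤ u := by
    rw [hrep]
    exact (Multiset.replicate_le_replicate a).mpr (min_le_left _ _)
  obtain ⟨u', hu', hau'⟩ := hu _ hle (by simp)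
  have hau : a ∈ u' := Multiset.mem_of_le hau' (Multiset.mem_replicate.mpr ⟨by omega, rfl⟩)
  obtain ⟨⟨⟨b, m⟩, hp, c, hc, rfl⟩, hM⟩ :=
    mem_and_one_mem_of_two_notMem h2 hu' (by rintro rfl; simp at hau)
  obtain rfl : a = b := Multiset.eq_of_mem_replicate hau
  refine ⟨[u], by simpa using hM, ?_, by simp⟩
  simp only [List.mem_singleton, forall_eq]
  exact ⟨(a, m), hp, k,
    Mult.mem_sem_of_le hc hk ((Multiset.replicate_le_replicate a).mp hau'), hrep⟩

lemma singleton_mem_factorLang {f : List (α × Mult) × Mult} (hf : Mandatory f) {a : α}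
    (ha : a ∈ symbols f) : {a} ∈ factorLang f := by
  obtain ⟨⟨_, m⟩, hp, rfl⟩ := List.mem_map.mp ha
  have hM : 0 ∉ f.2.sem := fun h => hf ⟨[], h, by simp, rfl⟩
  have hm : 0 ∉ m.sem := fun h =>
    hf ⟨[0], by simpa using Mult.one_mem_sem_of_zero_notMem hM, by simpa using ⟨_, hp, 0, h, rfl⟩,
      by simp⟩
  exact ⟨[{_}], by simpa using Mult.one_mem_sem_of_zero_notMem hM,
    by simpa using ⟨_, hp, 1, Mult.one_mem_sem_of_zero_notMem hm, rfl⟩, by simp⟩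

lemma sum_mem_concatLang {ι : Type} {l : List ι} {L : ι → Set (Multiset α)}
    {u : ι → Multiset α} (h : ∀ i ∈ l, u i ∈ L i) : (l.map u).sum ∈ concatLang (l.map L) := by
  induction l with
  | nil => rfl
  | cons i l ih =>
    exact ⟨u i, h i List.mem_cons_self, _,
      ih fun j hj => h j (List.mem_cons_of_mem i hj), List.sum_cons⟩

lemma DME.eq_of_mem_symbols (E : DME α) {f g : List (α × Mult) × Mult}
    (hf : f ∈ E.factors) (hg : g ∈ E.factors) {a : α} (haf : a ∈ symbols f)
    (hag : a ∈ symbols g) : f = g := by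
  have hpw : E.factors.Pairwise (Function.onFun List.Disjoint symbols) :=
    (List.nodup_flatMap.mp E.distinct).2
  have : Std.Symm (Function.onFun List.Disjoint (symbols (α := α))) := ⟨fun _ _ h => h.symm⟩
  by_contra hfg
  exact hpw.forall hf hg hfg haf hag

lemma filter_mem_factorLang_of_mem_concatLang {fs : List (List (α × Mult) × Mult)}
    (hnd : (fs.flatMap symbols).Nodup) {w : Multiset α}
    (hw : w ∈ concatLang (fs.map factorLang)) :
    (∀ a ∈ w, a ∈ fs.flatMap symbols) ∧ ∀ f ∈ fs, w.filter (· ∈ symbols f) ∈ factorLang f := by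
  induction fs generalizing w with
  | nil =>
    obtain rfl : w = 0 := hw
    simp
  | cons f fs ih =>
    obtain ⟨u, hu, v, hv, rfl⟩ := hw
    rw [List.flatMap_cons, List.nodup_append'] at hnd
    obtain ⟨-, hnd, hdisj⟩ := hnd
    obtain ⟨hvs, hvf⟩ := ih hnd hv
    have hus : ∀ a ∈ u, a ∈ symbols f := fun a ha => mem_symbols_of_mem_factorLang hu ha
    refine ⟨fun a ha => ?_, fun g hg => ?_⟩
    · rcases Multiset.mem_add.mp ha with ha | ha
      · exact List.mem_flatMap.mpr ⟨f, List.mem_cons_self, hus a ha⟩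
      · exact List.mem_append_right _ (hvs a ha)
    rcases List.mem_cons.mp hg with rfl | hg
    · rw [Multiset.filter_add, Multiset.filter_eq_self.mpr hus,
        Multiset.filter_eq_nil.mpr fun a ha haf => hdisj haf (hvs a ha), add_zero]
      exact hu
    · rw [Multiset.filter_add, Multiset.filter_eq_nil.mpr fun a ha hag =>
        hdisj (hus a ha) (List.mem_flatMap.mpr ⟨g, hg, hag⟩), zero_add]
      exact hvf g hg

lemma sum_map_filter_symbols {fs : List (List (α × Mult) × Mult)}
    (hnd : (fs.flatMap symbols).Nodup) {w : Multiset α} (hw : ∀ a ∈ w, a ∈ fs.flatMap symbols) :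
    (fs.map fun f => w.filter (· ∈ symbols f)).sum = w := by
  induction fs generalizing w with
  | nil => simpa [eq_comm, Multiset.eq_zero_iff_forall_notMem] using hw
  | cons f fs ih =>
    rw [List.flatMap_cons, List.nodup_append'] at hnd
    obtain ⟨-, hnd, hdisj⟩ := hnd
    have hrest : ∀ g ∈ fs, w.filter (· ∈ symbols g)
        = (w.filter (· ∉ symbols f)).filter (· ∈ symbols g) := by
      intro g hg
      rw [Multiset.filter_filter]
      exact Multiset.filter_congr fun a _ =>
        ⟨fun hag => ⟨hag, fun haf => hdisj haf (List.mem_flatMap.mpr ⟨g, hg, hag⟩)⟩, And.left⟩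
    rw [List.map_cons, List.sum_cons, List.map_congr_left hrest, ih hnd, Multiset.filter_add_not]
    intro a ha
    obtain ⟨haw, haf⟩ := Multiset.mem_filter.mp ha
    simpa [haf] using hw a haw

theorem DME.mem_lang_iff (E : DME α) {w : Multiset α} :
    w ∈ E.lang ↔ (∀ a ∈ w, a ∈ E.factors.flatMap symbols) ∧
      ∀ f ∈ E.factors, w.filter (· ∈ symbols f) ∈ factorLang f := by
  refine ⟨filter_mem_factorLang_of_mem_concatLang E.distinct, fun ⟨hw, hf⟩ => ?_⟩
  rw [← sum_map_filter_symbols E.distinct hw]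
  exact sum_mem_concatLang hf

theorem DME.mem_lang_iff_locallyIn (E : DME α) {w : Multiset α} :
    w ∈ E.lang ↔
      LocallyIn E.lang w ∧ ∀ f ∈ E.factors, Mandatory f → ∃ x ∈ w, x ∈ symbols f := by
  constructor
  · intro hw
    refine ⟨LocallyIn.of_le hw le_rfl, fun f hf hm => ?_⟩
    by_contra! h
    exact hm (Multiset.filter_eq_nil.mpr h ▸ (E.mem_lang_iff.mp hw).2 f hf)
  rintro ⟨hloc, hmand⟩
  refine E.mem_lang_iff.mpr ⟨fun a ha => ?_, fun f hf => ?_⟩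
  · obtain ⟨u, hu, hau⟩ := hloc {a} (Multiset.singleton_le.mpr ha) (by simp)
    exact (E.mem_lang_iff.mp hu).1 a (Multiset.singleton_le.mp hau)
  by_cases h0 : w.filter (· ∈ symbols f) = 0
  · rw [h0]
    by_contra hm
    obtain ⟨x, hx, hxf⟩ := hmand f hf hm
    exact Multiset.filter_eq_nil.mp h0 x hx hxf
  refine mem_factorLang_of_locallyIn h0 fun v hv hv2 => ?_
  obtain ⟨u, hu, hvu⟩ := hloc v (hv.trans (Multiset.filter_le _ _)) hv2
  refine ⟨u.filter (· ∈ symbols f), (E.mem_lang_iff.mp hu).2 f hf, ?_⟩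
  rw [← Multiset.filter_eq_self.mpr fun a ha =>
    (Multiset.mem_filter.mp (Multiset.mem_of_le hv ha)).2]
  exact Multiset.filter_le_filter _ hvu

def pick : List (α × Mult) × Mult → Multiset α
  | (p :: _, _) => {p.1}
  | ([], _) => 0

lemma mem_symbols_of_mem_pick {f : List (α × Mult) × Mult} {x : α} (hx : x ∈ pick f) :
    x ∈ symbols f := by
  rcases f with ⟨_ | ⟨p, d⟩, M⟩ <;> simp_all [pick, symbols]

lemma eq_of_mem_pick {f : List (α × Mult) × Mult} {x y : α} (hx : x ∈ pick f)
    (hy : y ∈ pick f) : x = y := by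
  rcases f with ⟨_ | ⟨p, d⟩, M⟩ <;> simp_all [pick]

lemma pick_mem_factorLang {f : List (α × Mult) × Mult} (hne : f.1 ≠ []) (hf : Mandatory f) :
    pick f ∈ factorLang f := by
  rcases f with ⟨_ | ⟨p, d⟩, M⟩
  · exact absurd rfl hne
  · exact singleton_mem_factorLang hf (List.mem_cons_self (a := p.1))

noncomputable def fill (E : DME α) (v : Multiset α) : Multiset α :=
  (E.factors.map fun f =>
    if Mandatory f ∧ v.filter (· ∈ symbols f) = 0 then pick f else v.filter (· ∈ symbols f)).sum

lemma fill_mem_lang (E : DME α) {v : Multiset α}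
    (hv : ∀ f ∈ E.factors, v.filter (· ∈ symbols f) ≠ 0 →
      v.filter (· ∈ symbols f) ∈ factorLang f) :
    fill E v ∈ E.lang := by
  refine sum_mem_concatLang (L := factorLang) fun f hf => ?_
  split_ifs with h
  · exact pick_mem_factorLang (E.nonemptyDisj f hf) h.1
  by_cases h0 : v.filter (· ∈ symbols f) = 0
  · rw [h0]
    by_contra hm
    exact h ⟨hm, h0⟩
  · exact hv f hf h0

lemma fill_mem_lang_of_le {E : DME α} {u v : Multiset α} (hu : u ∈ E.lang) (hvu : v ≤ u) :
    fill E v ∈ E.lang :=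
  fill_mem_lang E fun f hf h0 => mem_factorLang_of_locallyIn h0
    (LocallyIn.of_le ((E.mem_lang_iff.mp hu).2 f hf) (Multiset.filter_le_filter _ hvu))

lemma le_fill (E : DME α) {v : Multiset α} (hv : ∀ a ∈ v, a ∈ E.factors.flatMap symbols) :
    v ≤ fill E v := by
  conv_lhs => rw [← sum_map_filter_symbols E.distinct hv]
  refine List.sum_le_sum fun f _ => ?_
  split_ifs with h
  · exact h.2 ▸ Multiset.zero_le _
  · exact le_rfl

lemma mem_fill {E : DME α} {v : Multiset α} {x : α} (hx : x ∈ fill E v) :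
    x ∈ v ∨ ∃ g ∈ E.factors, Mandatory g ∧ (∀ y ∈ v, y ∉ symbols g) ∧ x ∈ pick g := by
  obtain ⟨_, hu, hxu⟩ := exists_mem_of_mem_sum hx
  obtain ⟨g, hg, rfl⟩ := List.mem_map.mp hu
  split_ifs at hxu with h
  · exact Or.inr ⟨g, hg, h.1, Multiset.filter_eq_nil.mp h.2, hxu⟩
  · exact Or.inl (Multiset.mem_of_mem_filter hxu)

lemma exists_pick_mem_of_fill_mem {E₁ E₂ : DME α} {v : Multiset α} (hv : fill E₁ v ∈ E₂.lang)
    {f : List (α × Mult) × Mult} (hf : f ∈ E₂.factors) (hm : Mandatory f)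
    (hvf : ∀ y ∈ v, y ∉ symbols f) :
    ∃ g ∈ E₁.factors, Mandatory g ∧ (∀ y ∈ v, y ∉ symbols g) ∧ ∃ x ∈ pick g, x ∈ symbols f := by
  obtain ⟨x, hx, hxf⟩ := (E₂.mem_lang_iff_locallyIn.mp hv).2 f hf hm
  rcases mem_fill hx with hxv | ⟨g, hg, hgm, hvg, hxg⟩
  · exact absurd hxf (hvf x hxv)
  · exact ⟨g, hg, hgm, hvg, x, hxg, hxf⟩

noncomputable def mandatoryFactors (E : DME α) : Finset (List (α × Mult) × Mult) :=
  {f ∈ E.factors.toFinset | Mandatory f}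

lemma mem_mandatoryFactors {E : DME α} {f : List (α × Mult) × Mult} :
    f ∈ mandatoryFactors E ↔ f ∈ E.factors ∧ Mandatory f := by
  simp [mandatoryFactors]

lemma card_le_card_of_forall_exists_pick_mem {E : DME α}
    {A B : Finset (List (α × Mult) × Mult)} (hA : ∀ g ∈ A, g ∈ E.factors)
    (h : ∀ g ∈ A, ∃ f ∈ B, ∃ x ∈ pick f, x ∈ symbols g) : A.card ≤ B.card :=
  Finset.card_le_card_of_forall_subsingleton (fun g f => ∃ x ∈ pick f, x ∈ symbols g) h
    fun _ _ _ ⟨hg₁, _, hx₁, hxg₁⟩ _ ⟨hg₂, _, hx₂, hxg₂⟩ =>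
      E.eq_of_mem_symbols (hA _ hg₁) (hA _ hg₂) hxg₁ (eq_of_mem_pick hx₂ hx₁ ▸ hxg₂)

section CharacteristicSample

variable [Fintype α]

variable (α) in
noncomputable def smallWords : Finset (Multiset α) :=
  Finset.univ.image fun p : Option α × Option α =>
    ((p.1.toList ++ p.2.toList : List α) : Multiset α)

lemma mem_smallWords {v : Multiset α} (hv : Multiset.card v ≤ 2) : v ∈ smallWords α := by
  simp only [smallWords, Finset.mem_image, Finset.mem_univ, true_and, Prod.exists]
  interval_cases h : Multiset.card v
  · exact ⟨none, none, by simp [Multiset.card_eq_zero.mp h]⟩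
  · obtain ⟨a, rfl⟩ := Multiset.card_eq_one.mp h
    exact ⟨some a, none, by simp⟩
  · obtain ⟨a, b, rfl⟩ := Multiset.card_eq_two.mp h
    exact ⟨some a, some b, rfl⟩

noncomputable def charSample (E : DME α) : Finset (Multiset α) :=
  ((smallWords α).filter fun v => ∃ u ∈ E.lang, v ≤ u).image (fill E)

lemma fill_mem_charSample {E : DME α} {u v : Multiset α} (hu : u ∈ E.lang) (hvu : v ≤ u)
    (hv : Multiset.card v ≤ 2) : fill E v ∈ charSample E :=
  Finset.mem_image_of_mem _ (Finset.mem_filter.mpr ⟨mem_smallWords hv, u, hu, hvu⟩)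

lemma fill_singleton_mem_charSample {E : DME α} {f : List (α × Mult) × Mult}
    (hf : f ∈ E.factors) (hm : Mandatory f) {b : α} (hb : b ∈ symbols f) :
    fill E {b} ∈ charSample E := by
  have hmem : fill E {b} ∈ E.lang := by
    refine fill_mem_lang E fun g hg h0 => ?_
    have hbg : b ∈ symbols g := by simpa [Multiset.filter_singleton] using h0
    obtain rfl := E.eq_of_mem_symbols hg hf hbg hb
    simpa [Multiset.filter_singleton, hbg] using singleton_mem_factorLang hm hb
  refine fill_mem_charSample hmem (le_fill E ?_) (by simp)
  simpa using List.mem_flatMap.mpr ⟨f, hf, hb⟩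

lemma charSample_subset_lang (E : DME α) : ↑(charSample E) ⊆ E.lang := by
  intro w hw
  obtain ⟨v, hv, rfl⟩ := Finset.mem_image.mp hw
  obtain ⟨-, u, hu, hvu⟩ := Finset.mem_filter.mp hv
  exact fill_mem_lang_of_le hu hvu

lemma card_charSample_le (E : DME α) : (charSample E).card ≤ (Fintype.card α + 1) ^ 2 :=
  calc (charSample E).card ≤ (smallWords α).card :=
        Finset.card_image_le.trans (Finset.card_filter_le _ _)
    _ ≤ Fintype.card (Option α × Option α) := Finset.card_image_le
    _ = (Fintype.card α + 1) ^ 2 := by simp [sq]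

theorem exists_mandatory_symbols_subset {E E' : DME α}
    (h₁ : ↑(charSample E) ⊆ E'.lang) (h₂ : ↑(charSample E') ⊆ E.lang)
    {f' : List (α × Mult) × Mult} (hf' : f' ∈ E'.factors) (hm' : Mandatory f') :
    ∃ f ∈ E.factors, Mandatory f ∧ ∀ x ∈ symbols f, x ∈ symbols f' := by
  by_contra! hout
  by_cases hI : ∃ f₀ ∈ E.factors, Mandatory f₀ ∧ ∀ x ∈ symbols f', x ∈ symbols f₀
  · obtain ⟨f₀, hf₀, hm₀, hsub⟩ := hI
    obtain ⟨b, hb, hbf'⟩ := hout f₀ hf₀ hm₀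
    obtain ⟨g, hg, -, hbg, x, hxg, hxf'⟩ := exists_pick_mem_of_fill_mem
      (h₁ (fill_singleton_mem_charSample hf₀ hm₀ hb)) hf' hm' (by simpa using hbf')
    obtain rfl := E.eq_of_mem_symbols hg hf₀ (mem_symbols_of_mem_pick hxg) (hsub x hxf')
    exact hbg b (Multiset.mem_singleton_self b) hb
  push Not at hI
  -- The base word of `E` and the words `fill E' {s}` with `s ∈ f'` \ `f` give injections
  -- `Mand(E') → Mand(E)` and `Mand(E) → Mand(E') \ {f'}`, via the first symbols they contain.
  have hle : (mandatoryFactors E').card ≤ (mandatoryFactors E).card := by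
    refine card_le_card_of_forall_exists_pick_mem
      (fun g hg => (mem_mandatoryFactors.mp hg).1) fun g hg => ?_
    obtain ⟨hg, hgm⟩ := mem_mandatoryFactors.mp hg
    have hbase : fill E 0 ∈ charSample E :=
      fill_mem_charSample (fill_mem_lang E (v := 0) (by simp)) (Multiset.zero_le _) (by simp)
    obtain ⟨f, hf, hfm, -, hx⟩ := exists_pick_mem_of_fill_mem (h₁ hbase) hg hgm (by simp)
    exact ⟨f, mem_mandatoryFactors.mpr ⟨hf, hfm⟩, hx⟩
  have hlt : (mandatoryFactors E).card ≤ ((mandatoryFactors E').erase f').card := by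
    refine card_le_card_of_forall_exists_pick_mem
      (fun f hf => (mem_mandatoryFactors.mp hf).1) fun f hf => ?_
    obtain ⟨hf, hfm⟩ := mem_mandatoryFactors.mp hf
    obtain ⟨s, hs, hsf⟩ := hI f hf hfm
    obtain ⟨g, hg, hgm, hsg, hx⟩ := exists_pick_mem_of_fill_mem
      (h₂ (fill_singleton_mem_charSample hf' hm' hs)) hf hfm (by simpa using hsf)
    refine ⟨g, Finset.mem_erase.mpr ⟨?_, mem_mandatoryFactors.mpr ⟨hg, hgm⟩⟩, hx⟩
    rintro rfl
    exact hsg s (Multiset.mem_singleton_self s) hs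
  have hf'mem : f' ∈ mandatoryFactors E' := mem_mandatoryFactors.mpr ⟨hf', hm'⟩
  rw [Finset.card_erase_of_mem hf'mem] at hlt
  have := Finset.card_pos.mpr ⟨f', hf'mem⟩
  omega

theorem lang_subset_of_charSample_subset {E E' : DME α}
    (h₁ : ↑(charSample E) ⊆ E'.lang) (h₂ : ↑(charSample E') ⊆ E.lang) :
    E.lang ⊆ E'.lang := by
  intro w hw
  have hsyms := (E.mem_lang_iff.mp hw).1
  refine E'.mem_lang_iff_locallyIn.mpr ⟨fun v hv hv2 => ⟨fill E v,
    h₁ (fill_mem_charSample hw hv hv2), le_fill E fun a ha => hsyms a (Multiset.mem_of_le hv ha)⟩,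
    fun f' hf' hm' => ?_⟩
  obtain ⟨f, hf, hm, hsub⟩ := exists_mandatory_symbols_subset h₁ h₂ hf' hm'
  obtain ⟨x, hx, hxf⟩ := (E.mem_lang_iff_locallyIn.mp hw).2 f hf hm
  exact ⟨x, hx, hsub x hxf⟩

variable (α) in
noncomputable def universalDME : DME α where
  factors := Finset.univ.toList.map fun a => ([(a, Mult.star)], Mult.star)
  nonemptyDisj := by simp
  distinct := by simpa [List.flatMap_map] using Finset.nodup_toList Finset.univ

lemma mem_universalDME_lang (w : Multiset α) : w ∈ (universalDME α).lang := by
  refine (universalDME α).mem_lang_iff.mpr ⟨fun a _ => by simp [universalDME, symbols], ?_⟩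
  simp only [universalDME, List.mem_map, Finset.mem_toList, Finset.mem_univ, true_and]
  rintro _ ⟨a, rfl⟩
  refine mem_factorLang_of_card_mem trivial fun b hb => ⟨Mult.star, ?_, trivial⟩
  simpa [symbols] using (Multiset.mem_filter.mp hb).2

variable (α) in
noncomputable def learner (D : {D : Finset (Multiset α) // D.Nonempty}) : DME α :=
  if h : ∃ E : DME α, charSample E ⊆ D.val ∧ ↑D.val ⊆ E.lang then h.choose else universalDME α

variable (α) in
lemma subset_lang_learner (D : {D : Finset (Multiset α) // D.Nonempty}) :
    ↑D.val ⊆ (learner α D).lang := by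
  unfold learner
  split_ifs with h
  · exact h.choose_spec.2
  · exact fun w _ => mem_universalDME_lang w

lemma lang_learner_eq {E : DME α} {D : Finset (Multiset α)} (hne : D.Nonempty)
    (hCS : charSample E ⊆ D) (hD : ↑D ⊆ E.lang) : (learner α ⟨D, hne⟩).lang = E.lang := by
  have hex : ∃ E' : DME α, charSample E' ⊆ D ∧ ↑D ⊆ E'.lang := ⟨E, hCS, hD⟩
  rw [learner, dif_pos hex]
  obtain ⟨hCS', hD'⟩ := hex.choose_spec
  have h₁ : ↑(charSample E) ⊆ hex.choose.lang := (Finset.coe_subset.mpr hCS).trans hD'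
  have h₂ : ↑(charSample hex.choose) ⊆ E.lang := (Finset.coe_subset.mpr hCS').trans hD
  exact (lang_subset_of_charSample_subset h₂ h₁).antisymm (lang_subset_of_charSample_subset h₁ h₂)

end CharacteristicSample

end Learnability

/-- The class DME is learnable from positive examples: a sound
learner, complete with characteristic samples of cardinality polynomial in the
size of the alphabet. -/
theorem dme_learnable_from_positive :
    ∃ p : Polynomial ℕ,
      ∀ (α : Type) [Fintype α],
        ∃ learner : {D : Finset (Multiset α) // D.Nonempty} → DME α,
          (∀ D : {D : Finset (Multiset α) // D.Nonempty},
              ↑D.val ⊆ (learner D).lang) ∧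
          (∀ E : DME α, ∃ CS : Finset (Multiset α),
              ↑CS ⊆ E.lang ∧ CS.card ≤ p.eval (Fintype.card α) ∧
              ∀ (D : Finset (Multiset α)) (hne : D.Nonempty),
                CS ⊆ D → ↑D ⊆ E.lang →
                (learner ⟨D, hne⟩).lang = E.lang) := by
  refine ⟨(Polynomial.X + 1) ^ 2, fun α _ => ⟨learner α, subset_lang_learner α, fun E =>
    ⟨charSample E, charSample_subset_lang E, ?_, fun D hne => lang_learner_eq hne⟩⟩⟩
  simpa using card_charSample_le E

end LSXML
end

section
/- There exists a polynomial p : ℕ → ℕ such that for every finite alphabet Σ there is a function learner mapping each pair (D⁺, D⁻) of finite sets of trees over Σ (positive and negative examples, D⁺ nonempty) to either an MS over Σ or null, with: (soundness) learner(D⁺, D⁻) returns an MS S with D⁺ ⊆ L(S) and D⁻ ∩ L(S) = ∅ whenever such an MS exists, and returns null otherwise; and (completeness) for every MS S over Σ there exists a finite set CS_S ⊆ L(S) with |CS_S| ≤ p(|Σ|) such that for all (D⁺, D⁻) with CS_S ⊆ D⁺ ⊆ L(S) and D⁻ ∩ L(S) = ∅, learner(D⁺, D⁻) returns an MS whose language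 equals L(S). -/
namespace LSXML

/-!
For a set `D` of trees, the minimal schema of `D` gives the pair of labels `(a, b)` the least
multiplicity containing every number of `b`-children of an `a`-node of `D`. Its language lies
inside that of every MS accepting `D` with the same root: every label of a tree it accepts
already occurs in `D`, and at such labels its rules are at least as restrictive. So a consistent
MS exists iff the minimal schema is consistent, and the learner returns the minimal schema.

A multiplicity only distinguishes the counts `0`, `1` and `≥ 2`. Choosing in `L(S)` one witness
for each triple `(a, b, min count 2)` that occurs, at most `3 |Σ|²` trees, forces the minimal
schema of every consistent sample containing the witnesses to accept all of `L(S)`.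
-/

namespace Mult

theorem mem_sem_iff_min_two (M : Mult) (n : ℕ) : n ∈ M.sem ↔ min n 2 ∈ M.sem := by
  cases M <;> simp only [sem, Set.mem_univ, Set.mem_ofPred_eq, Set.mem_insert_iff,
    Set.mem_singleton_iff] <;> omega

open Classical in
noncomputable def least (C : Set ℕ) : Mult :=
  if ∃ n ∈ C, 2 ≤ n then (if 0 ∈ C then .star else .plus)
  else if 0 ∈ C then (if 1 ∈ C then .opt else .zero)
  else .one

theorem subset_sem_least (C : Set ℕ) : C ⊆ (least C).sem := by
  intro n hn
  unfold least
  split_ifs <;> simp only [sem, Set.mem_univ, Set.mem_ofPred_eq,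
    Set.mem_insert_iff, Set.mem_singleton_iff] <;> grind

theorem sem_least_subset {C : Set ℕ} (hC : C.Nonempty) {M : Mult} (h : C ⊆ M.sem) :
    (least C).sem ⊆ M.sem := by
  obtain ⟨m, hm⟩ := hC
  intro n hn
  unfold least at hn
  cases M <;> split_ifs at hn <;> simp only [sem, Set.mem_univ, Set.mem_ofPred_eq,
    Set.mem_insert_iff, Set.mem_singleton_iff, Set.subset_def] at hn h ⊢ <;> grind

theorem mem_sem_least_of_min_eq {C : Set ℕ} {m n : ℕ} (hm : m ∈ C) (h : min m 2 = min n 2) :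
    n ∈ (least C).sem := by
  rw [mem_sem_iff_min_two, ← h, ← mem_sem_iff_min_two]
  exact subset_sem_least C hm

end Mult

namespace UTree

variable {α : Type}

@[induction_eliminator]
theorem induction {motive : UTree α → Prop}
    (node : ∀ a ts, (∀ t ∈ ts, motive t) → motive (.node a ts)) : ∀ t, motive t
  | .node a ts => node a ts fun t _ => induction node t

def childLabels : UTree α → Multiset α
  | .node _ ts => ((ts.map label : List α) : Multiset α)

def subtrees : UTree α → List (UTree α)
  | .node a ts => .node a ts :: ts.attach.flatMap fun t => subtrees t.1
decreasing_by
  have := List.sizeOf_lt_of_mem t.2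
  simp only [node.sizeOf_spec]
  omega

theorem mem_subtrees_node {a : α} {ts : List (UTree α)} {s : UTree α} :
    s ∈ (node a ts).subtrees ↔ s = node a ts ∨ ∃ t ∈ ts, s ∈ t.subtrees := by
  simp [subtrees]

theorem mem_subtrees_self (t : UTree α) : t ∈ t.subtrees := by
  cases t
  exact mem_subtrees_node.2 (.inl rfl)

theorem mem_subtrees_trans {s t u : UTree α} (hs : s ∈ t.subtrees) (hu : u ∈ s.subtrees) :
    u ∈ t.subtrees := by
  induction t with
  | node a ts ih =>
    rcases mem_subtrees_node.1 hs with rfl | ⟨t', ht', hs'⟩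
    · exact hu
    · exact mem_subtrees_node.2 (.inr ⟨t', ht', ih t' ht' hs'⟩)

theorem exists_mem_subtrees_label_eq_of_mem_childLabels {s : UTree α} {b : α}
    (hb : b ∈ s.childLabels) : ∃ u ∈ s.subtrees, u.label = b := by
  cases s with
  | node a ts =>
    obtain ⟨t, ht, rfl⟩ := List.mem_map.1 (Multiset.mem_coe.1 hb)
    exact ⟨t, mem_subtrees_node.2 (.inr ⟨t, ht, mem_subtrees_self t⟩), rfl⟩

theorem msat_iff_forall_subtrees [DecidableEq α] {R : α → MExpr α} {t : UTree α} :
    t.MSat R ↔ ∀ s ∈ t.subtrees, s.childLabels ∈ (R s.label).lang := by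
  refine ⟨fun h => ?_, fun h => ?_⟩
  · induction h with
    | node a ts hmem _ ih =>
      intro s hs
      rcases mem_subtrees_node.1 hs with rfl | ⟨t', ht', hs'⟩
      · exact hmem
      · exact ih t' ht' s hs'
  · induction t with
    | node a ts ih =>
      refine .node a ts (h _ (mem_subtrees_self _)) fun t ht => ih t ht fun s hs => ?_
      exact h s (mem_subtrees_node.2 (.inr ⟨t, ht, hs⟩))

end UTree

namespace MExpr

variable {α : Type} [DecidableEq α]

theorem exists_mult (e : MExpr α) :
    ∃ m : α → Mult, ∀ w : Multiset α, w ∈ e.lang ↔ ∀ b, w.count b ∈ (m b).sem := by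
  have key : ∀ b, ∃ M : Mult, ∀ n, n ∈ M.sem ↔
      (∀ p ∈ e.entries, p.1 = b → n ∈ p.2.sem) ∧ (b ∉ e.entries.map Prod.fst → n = 0) := by
    intro b
    by_cases hb : b ∈ e.entries.map Prod.fst
    · obtain ⟨p, hp, rfl⟩ := List.mem_map.1 hb
      refine ⟨p.2, fun n => ⟨fun hn => ⟨fun q hq hqp => ?_, fun h => absurd hb h⟩,
        fun hn => hn.1 p hp rfl⟩⟩
      rwa [List.inj_on_of_nodup_map e.distinct hq hp hqp]
    · refine ⟨.zero, fun n => ⟨fun hn => ⟨fun p hp hpb => ?_, fun _ => hn⟩,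
        fun hn => hn.2 hb⟩⟩
      exact absurd (hpb ▸ List.mem_map_of_mem hp) hb
  choose m hm using key
  refine ⟨m, fun w => ?_⟩
  simp only [lang, hm, Set.mem_ofPred_eq]
  exact ⟨fun ⟨hall, hzero⟩ b => ⟨fun p hp hpb => hpb ▸ hall p hp, hzero b⟩,
    fun h => ⟨fun p hp => (h p.1).1 p hp rfl, fun b => (h b).2⟩⟩

variable [Fintype α]

noncomputable def ofFun (m : α → Mult) : MExpr α where
  entries := Finset.univ.toList.map fun b => (b, m b)
  distinct := by
    rw [List.map_map]
    exact (Finset.nodup_toList _).map fun _ _ h => h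

theorem mem_ofFun_lang {m : α → Mult} {w : Multiset α} :
    w ∈ (ofFun m).lang ↔ ∀ b, w.count b ∈ (m b).sem := by
  simp [lang, ofFun]

end MExpr

theorem exists_finset_card_le_subset_biUnion {β γ : Type} (T : Set β) (f : β → Set γ)
    (K : Finset γ) (hK : ∀ t ∈ T, f t ⊆ K) :
    ∃ F : Finset β, ↑F ⊆ T ∧ F.card ≤ K.card ∧ ∀ t ∈ T, f t ⊆ ⋃ t' ∈ F, f t' := by
  classical
  let pick : γ → Finset β := fun k => if h : ∃ t ∈ T, k ∈ f t then {h.choose} else ∅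
  have pick_of_exists {k : γ} (h : ∃ t ∈ T, k ∈ f t) : pick k = {h.choose} := dif_pos h
  refine ⟨K.biUnion pick, fun t ht => ?_, ?_, fun t ht k hk => ?_⟩
  · obtain ⟨k, -, hk⟩ := Finset.mem_biUnion.1 ht
    by_cases h : ∃ t ∈ T, k ∈ f t
    · rw [pick_of_exists h, Finset.mem_singleton] at hk
      exact hk ▸ h.choose_spec.1
    · simp [pick, h] at hk
  · refine (Finset.card_biUnion_le_card_mul _ _ 1 fun k _ => ?_).trans (Nat.mul_one _).le
    unfold pick
    split_ifs <;> simp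
  · have h : ∃ t ∈ T, k ∈ f t := ⟨t, ht, hk⟩
    refine Set.mem_biUnion (Finset.mem_biUnion.2 ⟨k, hK t ht hk, ?_⟩) h.choose_spec.2
    rw [pick_of_exists h]
    exact Finset.mem_singleton_self _

section Samples

variable {α : Type} [DecidableEq α]

def childCounts (T : Set (UTree α)) (a b : α) : Set ℕ :=
  {n | ∃ t ∈ T, ∃ s ∈ t.subtrees, s.label = a ∧ s.childLabels.count b = n}

def nodeLabels (T : Set (UTree α)) : Set α :=
  {a | ∃ t ∈ T, ∃ s ∈ t.subtrees, s.label = a}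

theorem childCounts_nonempty {T : Set (UTree α)} {a : α} (ha : a ∈ nodeLabels T) (b : α) :
    (childCounts T a b).Nonempty := by
  obtain ⟨t, ht, s, hs, hl⟩ := ha
  exact ⟨_, t, ht, s, hs, hl, rfl⟩

theorem mem_nodeLabels_of_mem_childCounts {T : Set (UTree α)} {a b : α} {n : ℕ}
    (hn : n ∈ childCounts T a b) (hpos : 0 < n) : b ∈ nodeLabels T := by
  obtain ⟨t, ht, s, hs, -, rfl⟩ := hn
  obtain ⟨u, hu, hl⟩ := UTree.exists_mem_subtrees_label_eq_of_mem_childLabels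
    (Multiset.count_pos.1 hpos)
  exact ⟨t, ht, u, UTree.mem_subtrees_trans hs hu, hl⟩

/-- Multiplicities cannot tell apart counts `≥ 2`, so counts are recorded up to `2`. -/
def UTree.countProfile (t : UTree α) : Set (α × α × ℕ) :=
  {(s.label, b, min (s.childLabels.count b) 2) | (s ∈ t.subtrees) (b : α)}

theorem exists_finset_countProfile [Fintype α] (T : Set (UTree α)) :
    ∃ F : Finset (UTree α), ↑F ⊆ T ∧ F.card ≤ 3 * Fintype.card α ^ 2 ∧
      ∀ t ∈ T, t.countProfile ⊆ ⋃ t' ∈ F, t'.countProfile := by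
  obtain ⟨F, hFT, hcard, hF⟩ := exists_finset_card_le_subset_biUnion T UTree.countProfile
    (Finset.univ ×ˢ Finset.univ ×ˢ Finset.range 3) fun t _ => by
      rintro _ ⟨s, -, b, rfl⟩
      simp only [Finset.coe_product, Finset.coe_univ, Finset.coe_range, Set.mem_prod,
        Set.mem_univ, Set.mem_Iio, true_and]
      omega
  refine ⟨F, hFT, hcard.trans_eq ?_, hF⟩
  simp only [Finset.card_product, Finset.card_univ, Finset.card_range]
  ring

end Samples

namespace MS

variable {α : Type} [DecidableEq α]

def Consistent (S : MS α) (P N : Set (UTree α)) : Prop :=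
  P ⊆ S.lang ∧ ∀ t ∈ N, t ∉ S.lang

variable [Fintype α]

noncomputable def minimal (D : Set (UTree α)) (r : α) : MS α :=
  ⟨r, fun a => .ofFun fun b => Mult.least (childCounts D a b)⟩

variable {D : Set (UTree α)} {r : α}

theorem msat_minimal {t : UTree α} (ht : t ∈ D) : t.MSat (minimal D r).rules :=
  UTree.msat_iff_forall_subtrees.2 fun s hs =>
    MExpr.mem_ofFun_lang.2 fun _ => Mult.subset_sem_least _ ⟨t, ht, s, hs, rfl, rfl⟩

theorem subset_lang_minimal (hD : ∀ t ∈ D, t.label = r) : D ⊆ (minimal D r).lang :=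
  fun t ht => ⟨hD t ht, msat_minimal ht⟩

theorem label_mem_nodeLabels_of_msat_minimal {t : UTree α} (ht : t.MSat (minimal D r).rules)
    (hl : t.label ∈ nodeLabels D) : ∀ s ∈ t.subtrees, s.label ∈ nodeLabels D := by
  induction t with
  | node a ts ih =>
    intro s hs
    cases ht with
    | node _ _ hmem hall =>
    rcases UTree.mem_subtrees_node.1 hs with rfl | ⟨t', ht', hs'⟩
    · exact hl
    refine ih t' ht' (hall t' ht') ?_ s hs'
    -- a label absent from `D` gets multiplicity `0` under every label occurring in `D`
    by_contra hno
    have hzero : childCounts D a t'.label ⊆ Mult.zero.sem := fun n hn =>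
      by_contra fun hn0 => hno (mem_nodeLabels_of_mem_childCounts hn (Nat.pos_of_ne_zero hn0))
    exact Multiset.count_ne_zero.2 (Multiset.mem_coe.2 (List.mem_map_of_mem ht'))
      (Mult.sem_least_subset (childCounts_nonempty hl _) hzero
        (MExpr.mem_ofFun_lang.1 hmem t'.label))

theorem msat_of_msat_minimal {R : α → MExpr α} (hD : ∀ t ∈ D, t.MSat R) {t : UTree α}
    (ht : t.MSat (minimal D r).rules) (hl : t.label ∈ nodeLabels D) : t.MSat R := by
  have hlabels := label_mem_nodeLabels_of_msat_minimal ht hl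
  rw [UTree.msat_iff_forall_subtrees] at ht ⊢
  intro s hs
  obtain ⟨m, hm⟩ := (R s.label).exists_mult
  refine (hm _).2 fun b => Mult.sem_least_subset (childCounts_nonempty (hlabels s hs) b) ?_
    (MExpr.mem_ofFun_lang.1 (ht s hs) b)
  rintro _ ⟨t', ht', s', hs', hl', rfl⟩
  exact (hm _).1 (hl' ▸ UTree.msat_iff_forall_subtrees.1 (hD t' ht') s' hs') b

theorem lang_minimal_subset {S : MS α} (hD : D ⊆ S.lang) {t₀ : UTree α} (h₀ : t₀ ∈ D) :
    (minimal D t₀.label).lang ⊆ S.lang := fun _ ⟨hr, ht⟩ =>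
  ⟨hr.trans (hD h₀).1, msat_of_msat_minimal (fun _ ht' => (hD ht').2) ht
    ⟨t₀, h₀, t₀, UTree.mem_subtrees_self t₀, hr.symm⟩⟩

theorem consistent_minimal_iff_exists {P N : Set (UTree α)} {t₀ : UTree α} (h₀ : t₀ ∈ P) :
    (minimal P t₀.label).Consistent P N ↔ ∃ S : MS α, S.Consistent P N := by
  refine ⟨fun h => ⟨_, h⟩, fun ⟨S, hP, hN⟩ => ⟨?_, fun t ht hmin => ?_⟩⟩
  · exact subset_lang_minimal fun t ht => (hP ht).1.trans (hP h₀).1.symm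
  · exact hN t ht (lang_minimal_subset hP h₀ hmin)

open Classical in
noncomputable def learn (P N : Set (UTree α)) (r : α) : Option (MS α) :=
  if (minimal P r).Consistent P N then some (minimal P r) else none

theorem consistent_of_learn_eq_some {P N : Set (UTree α)} {r : α} {S : MS α}
    (h : learn P N r = some S) : S.Consistent P N := by
  unfold learn at h
  split_ifs at h with hc
  exact Option.some_injective _ h ▸ hc

theorem learn_eq_none_iff {P N : Set (UTree α)} {t₀ : UTree α} (h₀ : t₀ ∈ P) :
    learn P N t₀.label = none ↔ ¬ ∃ S : MS α, S.Consistent P N := by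
  rw [← consistent_minimal_iff_exists h₀, learn]
  split_ifs with hc <;> simp [hc]

theorem learn_eq_some_minimal {P N : Set (UTree α)} {t₀ : UTree α} (h₀ : t₀ ∈ P) {S : MS α}
    (hS : S.Consistent P N) : learn P N t₀.label = some (minimal P t₀.label) :=
  if_pos ((consistent_minimal_iff_exists h₀).2 ⟨S, hS⟩)

theorem lang_minimal_eq {S : MS α} (hD : D ⊆ S.lang) {t₀ : UTree α} (h₀ : t₀ ∈ D)
    (hprof : ∀ t ∈ S.lang, t.countProfile ⊆ ⋃ t' ∈ D, t'.countProfile) :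
    (minimal D t₀.label).lang = S.lang := by
  refine (lang_minimal_subset hD h₀).antisymm fun t ht => ⟨ht.1.trans (hD h₀).1.symm, ?_⟩
  refine UTree.msat_iff_forall_subtrees.2 fun s hs => MExpr.mem_ofFun_lang.2 fun b => ?_
  obtain ⟨t', ht', s', hs', b', he⟩ := Set.mem_iUnion₂.1 (hprof t ht ⟨s, hs, b, rfl⟩)
  simp only [Prod.mk.injEq] at he
  obtain ⟨hl, rfl, hmin⟩ := he
  exact Mult.mem_sem_least_of_min_eq ⟨t', ht', s', hs', hl, rfl⟩ hmin

end MS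

/-- The class MS is learnable from positive and negative
examples: the learner returns a consistent MS whenever one exists and `null`
(`none`) otherwise, and on any sample extending a characteristic sample of a
schema `S` consistently with `S` it returns an MS with the same language. -/
theorem ms_learnable_from_positive_and_negative :
    ∃ p : Polynomial ℕ,
      ∀ (α : Type) [Fintype α] [DecidableEq α],
        ∃ learner :
            {D : Finset (UTree α) × Finset (UTree α) // D.1.Nonempty} → Option (MS α),
          (∀ D : {D : Finset (UTree α) × Finset (UTree α) // D.1.Nonempty},
              (∀ S : MS α, learner D = some S →
                  ↑D.val.1 ⊆ S.lang ∧ ∀ t ∈ D.val.2, t ∉ S.lang) ∧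
              (learner D = none ↔
                  ¬ ∃ S : MS α, ↑D.val.1 ⊆ S.lang ∧ ∀ t ∈ D.val.2, t ∉ S.lang)) ∧
          (∀ S : MS α, ∃ CS : Finset (UTree α),
              ↑CS ⊆ S.lang ∧ CS.card ≤ p.eval (Fintype.card α) ∧
              ∀ (Dp Dn : Finset (UTree α)) (hne : Dp.Nonempty),
                CS ⊆ Dp → ↑Dp ⊆ S.lang → (∀ t ∈ Dn, t ∉ S.lang) →
                ∃ S' : MS α, learner ⟨(Dp, Dn), hne⟩ = some S' ∧
                  S'.lang = S.lang) := by
  refine ⟨.C 3 * .X ^ 2, fun α _ _ => ⟨fun D => MS.learn ↑D.1.1 ↑D.1.2 D.2.choose.label,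
    fun D => ⟨fun S hS => MS.consistent_of_learn_eq_some hS,
      MS.learn_eq_none_iff (Finset.mem_coe.2 D.2.choose_spec)⟩, fun S => ?_⟩⟩
  obtain ⟨CS, hCS, hcard, hprof⟩ := exists_finset_countProfile S.lang
  refine ⟨CS, hCS, by simpa using hcard, fun Dp Dn hne hsub hDp hDn => ?_⟩
  have h₀ : hne.choose ∈ (Dp : Set (UTree α)) := hne.choose_spec
  exact ⟨_, MS.learn_eq_some_minimal h₀ ⟨hDp, hDn⟩, MS.lang_minimal_eq hDp h₀
    fun t ht => (hprof t ht).trans (Set.biUnion_subset_biUnion_left hsub)⟩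

end LSXML
end

section
/- For every finite alphabet Σ and every finite nonempty set D of trees over Σ all having the same root label r, there exists an MS S over Σ with root label r such that D ⊆ L(S) and for every MS S' over Σ with D ⊆ L(S') one has L(S) ⊆ L(S'); moreover any two such minimum MS have equal languages, i.e., the minimal MS consistent with D is unique. -/
namespace LSXML

/-!
The least schema gives each symbol `a` the rule that assigns to every symbol `b` the least
multiplicity covering all numbers of `b`-children of `a`-nodes in `D`. Any schema accepting `D`
must allow these numbers, so rule by rule it is weaker wherever `a` occurs in `D`. A tree of the
least schema only ever reaches labels occurring in `D`: a child labelled `b` of an `a`-node is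
allowed only if some `a`-node of `D` has a `b`-child. Uniqueness is antisymmetry of `⊆`.
-/

open Classical in
/-- The least multiplicity whose semantics contains `s`; on the empty set its value is arbitrary. -/
noncomputable def Mult.hull (s : Set ℕ) : Mult :=
  if ∃ n ∈ s, 2 ≤ n then (if 0 ∈ s then .star else .plus)
  else if 0 ∈ s then (if 1 ∈ s then .opt else .zero) else .one

theorem Mult.subset_sem_hull (s : Set ℕ) : s ⊆ (Mult.hull s).sem := by
  intro n hn
  unfold hull
  split_ifs <;> simp [sem] <;> grind

theorem Mult.sem_hull_subset {s : Set ℕ} (hs : s.Nonempty) {M : Mult} (h : s ⊆ M.sem) :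
    (Mult.hull s).sem ⊆ M.sem := by
  obtain ⟨m, hm⟩ := hs
  unfold hull
  cases M <;> split_ifs <;> simp_all [sem, Set.subset_def] <;> grind

namespace UTree

variable {α : Type}

inductive HasNode : UTree α → α → Multiset α → Prop
  | root (a : α) (ts : List (UTree α)) : HasNode (node a ts) a (ts.map label : List α)
  | child {b a : α} {ts : List (UTree α)} {s : UTree α} {u : Multiset α} :
      s ∈ ts → HasNode s a u → HasNode (node b ts) a u

theorem HasNode.exists_of_mem {t : UTree α} {a b : α} {u : Multiset α} (h : t.HasNode a u)
    (hb : b ∈ u) : ∃ v, t.HasNode b v := by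
  induction h with
  | root a ts =>
    obtain ⟨⟨b, cs⟩, hs, rfl⟩ := List.mem_map.mp (Multiset.mem_coe.mp hb)
    exact ⟨_, .child hs (.root b cs)⟩
  | child hs _ ih =>
    obtain ⟨v, hv⟩ := ih hb
    exact ⟨v, .child hs hv⟩

variable [DecidableEq α] {R : α → MExpr α}

theorem MSat.mem_lang_of_hasNode {t : UTree α} (ht : t.MSat R) {a : α} {u : Multiset α}
    (h : t.HasNode a u) : u ∈ (R a).lang := by
  induction h with
  | root a ts => cases ht; assumption
  | child hs _ ih => cases ht with | node _ _ _ hch => exact ih (hch _ hs)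

theorem msat_of_forall_hasNode :
    ∀ {t : UTree α}, (∀ a u, t.HasNode a u → u ∈ (R a).lang) → t.MSat R
  | node a ts, h => .node a ts (h _ _ (.root a ts)) fun s hs =>
      msat_of_forall_hasNode fun b u hu => h b u (.child hs hu)

end UTree

section LeastSchema

variable {α : Type}

def childWords (D : Set (UTree α)) (a : α) : Set (Multiset α) :=
  {u | ∃ t ∈ D, t.HasNode a u}

theorem childWords_label_nonempty {D : Set (UTree α)} {t : UTree α} (ht : t ∈ D) :
    (childWords D t.label).Nonempty := by
  cases t with | node a ts => exact ⟨_, _, ht, .root a ts⟩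

variable [DecidableEq α] [Fintype α]

noncomputable def leastRule (D : Set (UTree α)) (a : α) : MExpr α where
  entries := Finset.univ.toList.map fun b => (b, Mult.hull ((·.count b) '' childWords D a))
  distinct := by simpa [List.map_map, Function.comp_def] using Finset.nodup_toList _

noncomputable def leastMS (D : Set (UTree α)) (r : α) : MS α := ⟨r, leastRule D⟩

theorem mem_leastRule_lang {D : Set (UTree α)} {a : α} {w : Multiset α} :
    w ∈ (leastRule D a).lang ↔
      ∀ b, w.count b ∈ (Mult.hull ((·.count b) '' childWords D a)).sem := by
  simp [leastRule, MExpr.lang]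

variable {D : Set (UTree α)}

theorem childWords_nonempty_of_mem_leastRule_lang {a b : α} {w : Multiset α}
    (hw : w ∈ (leastRule D a).lang) (ha : (childWords D a).Nonempty) (hb : b ∈ w) :
    (childWords D b).Nonempty := by
  have hcount : ∃ u ∈ childWords D a, b ∈ u := by
    by_contra! hnone
    have hzero : (·.count b) '' childWords D a ⊆ Mult.zero.sem := by
      rintro _ ⟨u, hu, rfl⟩
      simpa [Mult.sem] using hnone u hu
    have := Mult.sem_hull_subset (ha.image _) hzero (mem_leastRule_lang.mp hw b)
    simp_all [Mult.sem]
  obtain ⟨u, ⟨t, ht, htu⟩, hbu⟩ := hcount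
  obtain ⟨v, hv⟩ := htu.exists_of_mem hbu
  exact ⟨v, t, ht, hv⟩

theorem leastRule_lang_subset {a : α} {E : MExpr α} (ha : (childWords D a).Nonempty)
    (hE : childWords D a ⊆ E.lang) : (leastRule D a).lang ⊆ E.lang := by
  intro w hw
  have hcover : ∀ (b : α) (M : Mult),
      (∀ u ∈ childWords D a, u.count b ∈ M.sem) → w.count b ∈ M.sem := fun b M hM =>
    Mult.sem_hull_subset (ha.image _) (by rintro _ ⟨u, hu, rfl⟩; exact hM u hu)
      (mem_leastRule_lang.mp hw b)
  refine ⟨fun p hp => hcover p.1 p.2 fun u hu => (hE hu).1 p hp, fun b hb => ?_⟩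
  simpa [Mult.sem] using hcover b .zero fun u hu => by simpa [Mult.sem] using (hE hu).2 b hb

theorem msat_of_msat_leastRule {R : α → MExpr α} (hR : ∀ a, childWords D a ⊆ (R a).lang)
    {t : UTree α} (ht : t.MSat (leastRule D)) (hlabel : (childWords D t.label).Nonempty) :
    t.MSat R := by
  induction ht with
  | node a ts hw _ ih =>
    refine .node a ts (leastRule_lang_subset hlabel (hR a) hw) fun s hs => ih s hs ?_
    exact childWords_nonempty_of_mem_leastRule_lang hw hlabel
      (Multiset.mem_coe.mpr (List.mem_map_of_mem hs))

theorem subset_leastMS_lang {r : α} (hroot : ∀ t ∈ D, t.label = r) :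
    D ⊆ (leastMS D r).lang :=
  fun t ht => ⟨hroot t ht, UTree.msat_of_forall_hasNode fun _ _ h =>
    mem_leastRule_lang.mpr fun _ => Mult.subset_sem_hull _ ⟨_, ⟨t, ht, h⟩, rfl⟩⟩

theorem leastMS_lang_subset {r : α} (hne : D.Nonempty) (hroot : ∀ t ∈ D, t.label = r)
    {S : MS α} (hS : D ⊆ S.lang) : (leastMS D r).lang ⊆ S.lang := by
  obtain ⟨t₀, ht₀⟩ := hne
  have hSroot : S.root = r := (hS ht₀).1.symm.trans (hroot t₀ ht₀)
  have hR : ∀ a, childWords D a ⊆ (S.rules a).lang := by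
    rintro a u ⟨t, ht, htu⟩
    exact (hS ht).2.mem_lang_of_hasNode htu
  rintro t ⟨hlabel, hsat⟩
  refine ⟨hlabel.trans hSroot.symm, msat_of_msat_leastRule hR hsat ?_⟩
  rw [hlabel, ← hroot t₀ ht₀]
  exact childWords_label_nonempty ht₀

end LeastSchema

/-- For every finite nonempty set of trees with a common root
label there is a minimum consistent MS, and it is unique up to equality of
languages. -/
theorem exists_unique_minimum_consistent_ms (α : Type) [Fintype α] [DecidableEq α]
    (r : α) (D : Finset (UTree α)) (hne : D.Nonempty)
    (hroot : ∀ t ∈ D, t.label = r) :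
    (∃ S : MS α, S.root = r ∧ ↑D ⊆ S.lang ∧
        ∀ S' : MS α, ↑D ⊆ S'.lang → S.lang ⊆ S'.lang) ∧
    (∀ S₁ S₂ : MS α,
        (↑D ⊆ S₁.lang ∧ ∀ S' : MS α, ↑D ⊆ S'.lang → S₁.lang ⊆ S'.lang) →
        (↑D ⊆ S₂.lang ∧ ∀ S' : MS α, ↑D ⊆ S'.lang → S₂.lang ⊆ S'.lang) →
        S₁.lang = S₂.lang) :=
  ⟨⟨leastMS D r, rfl, subset_leastMS_lang hroot, fun _ hS =>
      leastMS_lang_subset (Finset.coe_nonempty.mpr hne) hroot hS⟩,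
    fun S₁ S₂ h₁ h₂ => (h₁.2 S₂ h₂.1).antisymm (h₂.2 S₁ h₁.1)⟩

end LSXML
end

section
/- Let φ be a 3CNF formula with clauses c₁,…,c_k over variables x₁,…,x_n, Σ = {t₁,f₁,…,t_n,f_n}, and let D_φ be the sample of labeled unordered words defined from φ as in the reduction. For a valuation V : {x₁,…,x_n} → {true, false}, define the DME E_V = (v₁ | ⋯ | v_n)⁺ ∥ v̄₁^? ∥ ⋯ ∥ v̄_n^?, where v_i = t_i and v̄_i = f_i if V(x_i) = true, and v_i = f_i and v̄_i = t_i otherwise. Then V satisfies φ if and only if E_V is consistent with D_φ, i.e., every positive example of D_φ belongs to L(E_V) and no negative example of D_φ belongs to L(E_V). -/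
/-! A word lies in `L(E_V)` iff it contains some `v_i` and contains each `v̄_i` at most once.
So the positive examples, `ε` and the words `t_i t_i f_i f_i` behave as required for every `V`,
while `w_j` contains `v̄` of a literal of `c_j` twice exactly when `V` makes that literal true:
`w_j ∉ L(E_V)` iff `V` satisfies `c_j`. -/

namespace LSXML

/-- Alphabet of the reduction: `t_i = (i, true)`, `f_i = (i, false)`. -/
abbrev Sym (n : ℕ) := Fin n × Bool

/-- A 3CNF clause over variables `x₁, …, x_n`: three literals, each a variable
index together with a sign (`true` = positive literal). -/
abbrev Clause (n : ℕ) := Fin 3 → Fin n × Bool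

/-- A valuation satisfies a clause iff it makes some literal true. -/
def clauseSat {n : ℕ} (V : Fin n → Bool) (c : Clause n) : Prop :=
  ∃ j : Fin 3, V (c j).1 = (c j).2

/-- The positive example `t₁f₁⋯t_nf_n` (every symbol exactly once). -/
def wAll (n : ℕ) : Multiset (Sym n) := (Finset.univ : Finset (Sym n)).val

/-- The positive example `t_i f_i`. -/
def wPair {n : ℕ} (i : Fin n) : Multiset (Sym n) := {(i, true), (i, false)}

/-- The negative example `t_i t_i f_i f_i`. -/
def wTTFF {n : ℕ} (i : Fin n) : Multiset (Sym n) :=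
  {(i, true), (i, true), (i, false), (i, false)}

/-- The negative example `w_j = v_{j1}v_{j1}v_{j2}v_{j2}v_{j3}v_{j3}` of a
clause: `v_{jl} = t_{jl}` if the `l`-th literal is negative, `f_{jl}` if it is
positive, i.e. `v_{jl} = (x_{jl}, !s_{jl})`. -/
def wClause {n : ℕ} (c : Clause n) : Multiset (Sym n) :=
  ∑ j : Fin 3, Multiset.replicate 2 (((c j).1, !(c j).2) : Sym n)

/-- The DME `E_V = (v₁ | ⋯ | v_n)⁺ ∥ v̄₁^? ∥ ⋯ ∥ v̄_n^?` of a valuation `V`,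
where `v_i = t_i, v̄_i = f_i` if `V x_i = true`, and `v_i = f_i, v̄_i = t_i`
otherwise; concretely `v_i = (i, V i)` and `v̄_i = (i, !V i)`. -/
def EV {n : ℕ} (hn : 0 < n) (V : Fin n → Bool) : DME (Sym n) where
  factors :=
    ((List.finRange n).map fun i => (((i, V i) : Sym n), Mult.one), Mult.plus) ::
    ((List.finRange n).map fun i => ([(((i, !V i) : Sym n), Mult.opt)], Mult.one))
  nonemptyDisj := by
    intro d hd
    simp only [List.mem_cons, List.mem_map] at hd
    rcases hd with rfl | ⟨i, _, rfl⟩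
    · simp only [ne_eq, List.map_eq_nil_iff, List.finRange_eq_nil_iff]
      omega
    · simp
  distinct := by
    have heq : (((List.finRange n).map fun i =>
          ([(((i, !V i) : Sym n), Mult.opt)], Mult.one)).flatMap
          fun d => d.1.map Prod.fst) =
        (List.finRange n).map fun i => ((i, !V i) : Sym n) := by
      rw [List.flatMap_map]
      exact List.flatMap_pure_eq_map (fun i => ((i, !V i) : Sym n)) (List.finRange n)
    simp only [List.flatMap_cons, List.map_map, heq]
    rw [List.nodup_append]
    refine ⟨?_, ?_, ?_⟩
    · exact (List.nodup_finRange n).map fun a b h => congrArg Prod.fst h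
    · exact (List.nodup_finRange n).map fun a b h => congrArg Prod.fst h
    · intro p hp q hq hpq
      subst hpq
      simp only [List.mem_map, Function.comp] at hp hq
      obtain ⟨i, _, rfl⟩ := hp
      obtain ⟨j, _, hj⟩ := hq
      rw [Prod.mk.injEq] at hj
      obtain ⟨rfl, hb⟩ := hj
      cases V j <;> simp_all

section Languages

variable {α : Type}

theorem powLang_one (L : Set (Multiset α)) : powLang L .one = L := by
  ext w
  constructor
  · rintro ⟨ws, hlen, hmem, rfl⟩
    obtain ⟨u, rfl⟩ := List.length_eq_one_iff.mp hlen
    simpa using hmem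
  · intro hw
    exact ⟨[w], rfl, by simpa, by simp⟩

theorem disjLang_singleton_opt (a : α) : disjLang [(a, Mult.opt)] = {0, {a}} := by
  ext w
  simp [disjLang, atomLang, Mult.sem]

theorem disjLang_map_one {β : Type} (f : β → α) (l : List β) :
    disjLang (l.map fun i => (f i, Mult.one)) = (fun a => {a}) '' {a | a ∈ l.map f} := by
  ext w
  simp [disjLang, atomLang, Mult.sem, eq_comm]

theorem mem_powLang_singletons (S : Set α) (M : Mult) (u : Multiset α) :
    u ∈ powLang ((fun a => {a}) '' S) M ↔ Multiset.card u ∈ M.sem ∧ ∀ a ∈ u, a ∈ S := by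
  constructor
  · rintro ⟨ws, hlen, hmem, rfl⟩
    suffices Multiset.card ws.sum = ws.length ∧ ∀ a ∈ ws.sum, a ∈ S from
      ⟨this.1 ▸ hlen, this.2⟩
    clear hlen
    induction ws with
    | nil => simp
    | cons w ws ih =>
      obtain ⟨a, ha, rfl⟩ := hmem w List.mem_cons_self
      obtain ⟨hcard, hS⟩ := ih fun u hu => hmem u (List.mem_cons_of_mem _ hu)
      simp only [List.sum_cons, Multiset.card_add, Multiset.card_singleton, hcard,
        List.length_cons, Multiset.mem_add, Multiset.mem_singleton]
      exact ⟨add_comm _ _, by rintro b (rfl | hb) <;> simp_all⟩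
  · rintro ⟨hcard, hS⟩
    refine ⟨u.toList.map ({·}), by simpa using hcard, by simpa using hS, ?_⟩
    rw [← Multiset.sum_coe, ← Multiset.map_coe, Multiset.coe_toList, Multiset.sum_map_singleton]

theorem concatLang_map_opt [DecidableEq α] {β : Type} (f : β → α) (l : List β) :
    concatLang (l.map fun i => {0, {f i}}) = {v | v ≤ ((l.map f : List α) : Multiset α)} := by
  induction l with
  | nil => ext v; simp [concatLang]
  | cons a t ih =>
    ext v
    simp only [List.map_cons, concatLang, ih, Set.mem_ofPred_eq, Set.mem_insert_iff,
      Set.mem_singleton_iff, exists_eq_or_imp, exists_eq_left, zero_add, Multiset.singleton_add]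
    rw [← Multiset.cons_coe]
    constructor
    · rintro (⟨v, hv, rfl⟩ | ⟨v, hv, rfl⟩)
      · exact hv.trans (Multiset.le_cons_self _ _)
      · exact Multiset.cons_le_cons _ hv
    · intro hv
      by_cases ha : f a ∈ v
      · refine Or.inr ⟨v.erase (f a), ?_, (Multiset.cons_erase ha).symm⟩
        simpa using Multiset.erase_le_erase (f a) hv
      · exact Or.inl ⟨v, (Multiset.le_cons_of_notMem ha).mp hv, rfl⟩

theorem exists_add_iff_filter_nodup (p : α → Prop) [DecidablePred p]
    (w : Multiset α) :
    (∃ u, (u ≠ 0 ∧ ∀ a ∈ u, p a) ∧ ∃ v, (v.Nodup ∧ ∀ a ∈ v, ¬p a) ∧ w = u + v) ↔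
      (∃ a ∈ w, p a) ∧ (w.filter (¬p ·)).Nodup := by
  constructor
  · rintro ⟨u, ⟨hu0, hu⟩, v, ⟨hv, hvp⟩, rfl⟩
    obtain ⟨a, ha⟩ := Multiset.exists_mem_of_ne_zero hu0
    refine ⟨⟨a, Multiset.mem_add.mpr (Or.inl ha), hu a ha⟩, ?_⟩
    rwa [Multiset.filter_add, Multiset.filter_eq_nil.mpr fun a ha => not_not.mpr (hu a ha),
      Multiset.filter_eq_self.mpr hvp, zero_add]
  · rintro ⟨⟨a, ha, hpa⟩, hnodup⟩
    refine ⟨w.filter p, ⟨?_, fun b hb => (Multiset.mem_filter.mp hb).2⟩, w.filter (¬p ·),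
      ⟨hnodup, fun b hb => (Multiset.mem_filter.mp hb).2⟩, (Multiset.filter_add_not p w).symm⟩
    exact Multiset.card_pos.mp
      (Multiset.card_pos_iff_exists_mem.mpr ⟨a, Multiset.mem_filter.mpr ⟨ha, hpa⟩⟩)

theorem le_coe_iff_nodup_subset {l : List α} (hl : l.Nodup) {v : Multiset α} :
    v ≤ (l : Multiset α) ↔ v.Nodup ∧ v ⊆ l :=
  ⟨fun h => ⟨Multiset.nodup_of_le h hl, Multiset.subset_of_le h⟩,
    fun ⟨hv, hs⟩ => (Multiset.le_iff_subset hv).mpr hs⟩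

end Languages

section Reduction

variable {n : ℕ} (hn : 0 < n) (V : Fin n → Bool)

theorem mem_map_finRange_graph (f : Fin n → Bool) (a : Sym n) :
    a ∈ (List.finRange n).map (fun i => ((i, f i) : Sym n)) ↔ a.2 = f a.1 := by
  refine ⟨fun h => ?_, fun h => List.mem_map.mpr ⟨a.1, List.mem_finRange _, by rw [← h]⟩⟩
  obtain ⟨i, -, rfl⟩ := List.mem_map.mp h
  rfl

theorem EV_lang_eq : (EV hn V).lang =
    {w | ∃ u, (u ≠ 0 ∧ ∀ a ∈ u, a.2 = V a.1) ∧
      ∃ v, (v.Nodup ∧ ∀ a ∈ v, ¬a.2 = V a.1) ∧ w = u + v} := by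
  have hnodup : ((List.finRange n).map fun i => ((i, !V i) : Sym n)).Nodup :=
    (List.nodup_finRange n).map fun _ _ h => congrArg Prod.fst h
  ext w
  simp only [DME.lang, EV, List.map_cons, List.map_map, Function.comp_def, powLang_one,
    disjLang_singleton_opt, concatLang, disjLang_map_one, concatLang_map_opt, Set.mem_ofPred_eq,
    mem_powLang_singletons, le_coe_iff_nodup_subset hnodup, Multiset.subset_iff,
    Multiset.mem_coe, mem_map_finRange_graph, Bool.eq_not, Mult.sem, Nat.one_le_iff_ne_zero,
    ne_eq, Multiset.card_eq_zero]

theorem mem_EV_lang_iff (w : Multiset (Sym n)) :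
    w ∈ (EV hn V).lang ↔ (∃ a ∈ w, a.2 = V a.1) ∧ ∀ i, w.count (i, !V i) ≤ 1 := by
  rw [EV_lang_eq, Set.mem_ofPred_eq, exists_add_iff_filter_nodup,
    Multiset.nodup_iff_count_le_one]
  refine and_congr_right fun _ => ⟨fun h i => ?_, fun h b => ?_⟩
  · simpa [Multiset.count_filter] using h (i, !V i)
  · by_cases hb : b.2 = V b.1
    · simp [hb]
    · obtain ⟨i, c⟩ := b
      obtain rfl : c = !V i := Bool.eq_not.mpr hb
      exact (Multiset.count_le_of_le _ (Multiset.filter_le _ w)).trans (h i)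

theorem mem_EV_lang_of_nodup {w : Multiset (Sym n)} (hw : w.Nodup)
    (h : ∃ a ∈ w, a.2 = V a.1) : w ∈ (EV hn V).lang :=
  (mem_EV_lang_iff hn V w).mpr ⟨h, fun _ => Multiset.nodup_iff_count_le_one.mp hw _⟩

theorem wAll_mem_EV_lang : wAll n ∈ (EV hn V).lang :=
  mem_EV_lang_of_nodup hn V Finset.univ.nodup ⟨(⟨0, hn⟩, V ⟨0, hn⟩), Finset.mem_univ _, rfl⟩

theorem wPair_mem_EV_lang (i : Fin n) : wPair i ∈ (EV hn V).lang :=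
  mem_EV_lang_of_nodup hn V (by simp [wPair])
    ⟨(i, V i), by cases V i <;> simp [wPair], rfl⟩

theorem zero_notMem_EV_lang : (0 : Multiset (Sym n)) ∉ (EV hn V).lang := by
  simp [mem_EV_lang_iff]

theorem wTTFF_notMem_EV_lang (i : Fin n) : wTTFF i ∉ (EV hn V).lang := by
  intro h
  have := ((mem_EV_lang_iff hn V _).mp h).2 i
  cases hV : V i <;> simp [wTTFF, hV] at this

theorem mem_wClause {c : Clause n} {a : Sym n} :
    a ∈ wClause c ↔ ∃ j, a = ((c j).1, !(c j).2) := by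
  simp [wClause, Multiset.mem_sum]

theorem two_le_count_wClause (c : Clause n) (j : Fin 3) :
    2 ≤ (wClause c).count ((c j).1, !(c j).2) :=
  Multiset.le_count_iff_replicate_le.mpr <|
    Finset.single_le_sum (f := fun j => Multiset.replicate 2 (((c j).1, !(c j).2) : Sym n))
      (fun _ _ => Multiset.zero_le _) (Finset.mem_univ j)

theorem wClause_mem_EV_lang_iff (c : Clause n) :
    wClause c ∈ (EV hn V).lang ↔ ¬clauseSat V c := by
  rw [mem_EV_lang_iff]
  constructor
  · rintro ⟨-, hcount⟩ ⟨j, hj⟩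
    have h := hcount (c j).1
    rw [hj] at h
    exact absurd (two_le_count_wClause c j) (by omega)
  · intro hunsat
    have hlit (j : Fin 3) : V (c j).1 = !(c j).2 := Bool.eq_not.mpr (hunsat ⟨j, ·⟩)
    refine ⟨⟨((c 0).1, !(c 0).2), mem_wClause.mpr ⟨0, rfl⟩, (hlit 0).symm⟩, fun i => ?_⟩
    rw [Multiset.count_eq_zero.mpr fun hmem => ?_]
    · exact zero_le_one
    obtain ⟨j, hj⟩ := mem_wClause.mp hmem
    obtain ⟨rfl, h⟩ := Prod.mk.inj hj
    simp [hlit j] at h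

end Reduction

/-- A valuation `V` satisfies `φ` iff `E_V` is consistent with
the sample `D_φ` of the reduction. -/
theorem valuation_sat_iff_EV_consistent (n : ℕ) (hn : 0 < n)
    (φ : List (Clause n)) (V : Fin n → Bool) :
    (∀ c ∈ φ, clauseSat V c) ↔
    (wAll n ∈ (EV hn V).lang ∧ (∀ i : Fin n, wPair i ∈ (EV hn V).lang) ∧
     (0 : Multiset (Sym n)) ∉ (EV hn V).lang ∧
     (∀ i : Fin n, wTTFF i ∉ (EV hn V).lang) ∧
     ∀ c ∈ φ, wClause c ∉ (EV hn V).lang) := by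
  simp only [wClause_mem_EV_lang_iff, not_not]
  exact ⟨fun h => ⟨wAll_mem_EV_lang hn V, wPair_mem_EV_lang hn V, zero_notMem_EV_lang hn V,
    wTTFF_notMem_EV_lang hn V, h⟩, fun h => h.2.2.2.2⟩

end LSXML
end

section
/- For every finite alphabet Σ and every finite nonempty set D of trees over Σ all having the same root label, there exists a DMS S over Σ that is minimal consistent with D, i.e., D ⊆ L(S) and there is no DMS S' over Σ with D ⊆ L(S') and L(S') ⊊ L(S). -/
namespace LSXML

/-!
There are only finitely many DMSs over a finite alphabet: a DME mentions each symbol at most once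
and has nonempty disjunctions, so it has at most `|Σ|` factors, each of length at most `|Σ|`.
The DMS with root `r` whose every rule is `(a₁^* | ⋯ | a_k^*)^*` accepts every tree with root `r`,
so some DMS is consistent with `D`, and among the finitely many consistent ones one with a
`⊆`-minimal language exists.
-/

instance : Fintype Mult :=
  ⟨⟨{.star, .plus, .opt, .one, .zero}, by decide⟩, by intro x; cases x <;> decide⟩

theorem _root_.List.finite_setOf_length_le_of_forall_mem {β : Type*} {s : Set β} (hs : s.Finite)
    (n : ℕ) : {l : List β | l.length ≤ n ∧ ∀ x ∈ l, x ∈ s}.Finite := by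
  have := hs.to_subtype
  refine ((List.finite_length_le s n).image (List.map Subtype.val)).subset ?_
  rintro l ⟨hlen, hmem⟩
  exact ⟨l.pmap Subtype.mk hmem, by simpa using hlen, by simp [List.map_pmap]⟩

namespace DME

variable {α : Type}

theorem factors_injective : Function.Injective (DME.factors : DME α → _) := by
  rintro ⟨_, _, _⟩ ⟨_, _, _⟩ h
  cases h
  rfl

section Card

variable [Fintype α] (E : DME α)

theorem sum_length_le_card : (E.factors.map fun d => d.1.length).sum ≤ Fintype.card α := by
  simpa [List.length_flatMap, Function.comp_def] using E.distinct.length_le_card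

theorem length_le_card_of_mem {d : List (α × Mult) × Mult} (hd : d ∈ E.factors) :
    d.1.length ≤ Fintype.card α :=
  (List.single_le_sum (fun _ _ => Nat.zero_le _) _ (List.mem_map_of_mem hd)).trans
    E.sum_length_le_card

theorem length_factors_le_card : E.factors.length ≤ Fintype.card α := by
  have hpos : ∀ x ∈ E.factors.map fun d => d.1.length, 1 ≤ x := by
    simp only [List.mem_map]
    rintro _ ⟨d, hd, rfl⟩
    exact List.length_pos_iff.mpr (E.nonemptyDisj d hd)
  simpa using (List.length_le_sum_of_one_le _ hpos).trans E.sum_length_le_card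

instance : Finite (DME α) := by
  let n := Fintype.card α
  let F : Set (List (List (α × Mult) × Mult)) :=
    {l | l.length ≤ n ∧ ∀ d ∈ l, d.1.length ≤ n}
  have hfactor : {d : List (α × Mult) × Mult | d.1.length ≤ n}.Finite :=
    ((List.finite_length_le (α × Mult) n).prod Set.finite_univ).subset fun _ h => ⟨h, trivial⟩
  have : Finite F := (List.finite_setOf_length_le_of_forall_mem hfactor n).to_subtype
  exact Finite.of_injective
    (fun E => (⟨E.factors, E.length_factors_le_card, fun _ => E.length_le_card_of_mem⟩ : F))
    fun _ _ h => factors_injective (congrArg Subtype.val h)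

end Card

noncomputable def univ (α : Type) [Fintype α] [Nonempty α] : DME α where
  factors := [(Finset.univ.toList.map fun a => (a, Mult.star), Mult.star)]
  nonemptyDisj := by
    simpa [Finset.toList_eq_nil] using Finset.univ_nonempty.ne_empty
  distinct := by
    simpa [Function.comp_def] using Finset.nodup_toList _

theorem mem_lang_univ [Fintype α] [Nonempty α] (w : Multiset α) : w ∈ (univ α).lang := by
  classical
  refine ⟨w, ⟨w.toFinset.toList.map fun a => Multiset.replicate (w.count a) a, trivial, ?_, ?_⟩,
    0, rfl, (add_zero w).symm⟩
  · simp only [List.mem_map]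
    rintro _ ⟨a, -, rfl⟩
    exact ⟨(a, Mult.star), by simp, w.count a, trivial, rfl⟩
  · rw [Finset.sum_map_toList]
    simp_rw [← Multiset.nsmul_singleton]
    exact (Multiset.toFinset_sum_count_nsmul_eq w).symm

end DME

instance {α : Type} [Fintype α] : Finite (DMS α) :=
  Finite.of_injective (fun S => (S.root, S.rules)) (by rintro ⟨_, _⟩ ⟨_, _⟩ h; simp_all)

theorem UTree.sat_of_forall_mem_lang {α : Type} {R : α → DME α}
    (hR : ∀ a w, w ∈ (R a).lang) : ∀ t : UTree α, UTree.Sat R t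
  | .node a ts => .node a ts (hR a _) fun t _ => sat_of_forall_mem_lang hR t

theorem exists_minimal_consistent_dms_general (α : Type) [Fintype α]
    (D : Finset (UTree α))
    (hroot : ∃ r : α, ∀ t ∈ D, t.label = r) :
    ∃ S : DMS α, ↑D ⊆ S.lang ∧
      ¬ ∃ S' : DMS α, ↑D ⊆ S'.lang ∧ S'.lang ⊂ S.lang := by
  obtain ⟨r, hr⟩ := hroot
  have : Nonempty α := ⟨r⟩
  have hcons : {S : DMS α | ↑D ⊆ S.lang}.Nonempty :=
    ⟨⟨r, fun _ => DME.univ α⟩, fun t ht =>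
      ⟨hr t ht, UTree.sat_of_forall_mem_lang (fun _ => DME.mem_lang_univ) t⟩⟩
  obtain ⟨S, hS, hmin⟩ := (Set.toFinite _).exists_minimalFor DMS.lang _ hcons
  exact ⟨S, hS, fun ⟨S', hS', hlt⟩ => hlt.not_subset (hmin hS' hlt.le)⟩

/-- For every finite nonempty set `D` of trees with a common
root label there is a DMS that is minimal consistent with `D`. -/
theorem exists_minimal_consistent_dms (α : Type) [Fintype α]
    (D : Finset (UTree α)) (hne : D.Nonempty)
    (hroot : ∃ r : α, ∀ t ∈ D, t.label = r) :
    ∃ S : DMS α, ↑D ⊆ S.lang ∧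
      ¬ ∃ S' : DMS α, ↑D ⊆ S'.lang ∧ S'.lang ⊂ S.lang :=
  exists_minimal_consistent_dms_general α D hroot

end LSXML
end
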